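/- arXiv:2311.16398 — 3 statements merged into one kernel-verified Lean document; each statement's English description precedes it below -/
import Mathlib

section
/- For every c > 0 there exists a constant C > 0 such that for all ε ∈ (0, 1/2], the integral ∫₀^∞ (ε e^{-c r}) / (√r (√r + ε)) dr is at most C ε |log ε|. -/
/-!
Split `(0, ∞)` at `ε²` and `1`. Near the origin the integrand is at most `r ^ (-1/2)`, whose
integral over `(0, ε²]` is `2ε`; on `(ε², 1]` it is at most `ε / r`, which contributes
`2ε |log ε|`; beyond `1` it is at most `ε e^{-cr}`, contributing at most `ε / c`. Since
`|log ε| ≥ log 2` for `ε ≤ 1/2`, the logarithmic term dominates the two others.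
-/

open MeasureTheory Real Set

theorem integrableOn_of_nonneg_of_le {α : Type*} [MeasurableSpace α] {μ : Measure α}
    {f g : α → ℝ} {s : Set α} (hs : MeasurableSet s) (hf : AEStronglyMeasurable f μ)
    (hf₀ : ∀ x ∈ s, 0 ≤ f x) (hfg : ∀ x ∈ s, f x ≤ g x) (hg : IntegrableOn g s μ) :
    IntegrableOn f s μ :=
  hg.mono' hf.restrict <| (ae_restrict_iff' hs).2 <| ae_of_all _ fun x hx => by
    rw [norm_of_nonneg (hf₀ x hx)]; exact hfg x hx

theorem integral_Ioi_eq_Ioc_add_Ioc_add_Ioi {f : ℝ → ℝ} {a b c : ℝ} (hab : a ≤ b)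
    (hbc : b ≤ c) (hf₁ : IntegrableOn f (Ioc a b)) (hf₂ : IntegrableOn f (Ioc b c))
    (hf₃ : IntegrableOn f (Ioi c)) :
    ∫ x in Ioi a, f x =
      (∫ x in Ioc a b, f x) + (∫ x in Ioc b c, f x) + ∫ x in Ioi c, f x := by
  have hf₂₃ : IntegrableOn f (Ioi b) := Ioc_union_Ioi_eq_Ioi hbc ▸ hf₂.union hf₃
  rw [← Ioc_union_Ioi_eq_Ioi hab,
    setIntegral_union Ioc_disjoint_Ioi_same measurableSet_Ioi hf₁ hf₂₃,
    ← Ioc_union_Ioi_eq_Ioi hbc,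
    setIntegral_union Ioc_disjoint_Ioi_same measurableSet_Ioi hf₂ hf₃, add_assoc]

theorem integrableOn_Ioc_zero_rpow_neg_half (b : ℝ) :
    IntegrableOn (fun x : ℝ => x ^ (-(1 / 2) : ℝ)) (Ioc 0 b) :=
  (intervalIntegral.intervalIntegrable_rpow' (by norm_num)).1

theorem integral_Ioc_zero_rpow_neg_half {b : ℝ} (hb : 0 ≤ b) :
    ∫ x in Ioc 0 b, x ^ (-(1 / 2) : ℝ) = 2 * √b := by
  rw [← intervalIntegral.integral_of_le hb, integral_rpow (Or.inl (by norm_num)),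
    show (-(1 / 2) : ℝ) + 1 = 1 / 2 by norm_num, zero_rpow (by norm_num), ← sqrt_eq_rpow]
  ring

theorem integrableOn_Ioc_inv {a b : ℝ} (ha : 0 < a) :
    IntegrableOn (fun x : ℝ => x⁻¹) (Ioc a b) :=
  (continuousOn_inv₀.mono fun _ hx => (ha.trans_le hx.1).ne').integrableOn_compact isCompact_Icc
    |>.mono_set Ioc_subset_Icc_self

theorem integral_Ioc_inv {a b : ℝ} (ha : 0 < a) (hab : a ≤ b) :
    ∫ x in Ioc a b, x⁻¹ = log (b / a) := by
  rw [← intervalIntegral.integral_of_le hab, integral_inv]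
  exact fun h => ha.not_ge (uIcc_of_le hab ▸ h).1

theorem integral_Ioi_exp_neg_mul {c : ℝ} (hc : 0 < c) (a : ℝ) :
    ∫ x in Ioi a, exp (-c * x) = exp (-c * a) / c := by
  rw [integral_exp_mul_Ioi (neg_neg_of_pos hc), div_neg, neg_div, neg_neg]

theorem log_two_le_abs_log {x : ℝ} (hx₀ : 0 < x) (hx : x ≤ 1 / 2) : log 2 ≤ |log x| := by
  have hlog : log x ≤ -log 2 := by
    simpa only [one_div, log_inv] using log_le_log hx₀ hx
  linarith [neg_le_abs (log x)]

noncomputable def dampedKernel (c ε r : ℝ) : ℝ :=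
  ε * exp (-c * r) / (√r * (√r + ε))

section dampedKernel

variable {c ε r : ℝ}

theorem dampedKernel_nonneg (hε : 0 ≤ ε) : 0 ≤ dampedKernel c ε r := by
  unfold dampedKernel; positivity

theorem measurable_dampedKernel : Measurable (dampedKernel c ε) := by
  unfold dampedKernel; fun_prop

theorem dampedKernel_le_rpow (hε : 0 ≤ ε) (hc : 0 ≤ c) (hr : 0 < r) :
    dampedKernel c ε r ≤ r ^ (-(1 / 2) : ℝ) := by
  have hs : 0 < √r := sqrt_pos.2 hr
  have hexp : exp (-c * r) ≤ 1 := exp_le_one_iff.2 (by nlinarith)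
  rw [rpow_neg hr.le, ← sqrt_eq_rpow, dampedKernel, div_le_iff₀ (by positivity),
    inv_mul_cancel_left₀ hs.ne']
  nlinarith

theorem dampedKernel_le_div (hε : 0 ≤ ε) (hc : 0 ≤ c) (hr : 0 < r) :
    dampedKernel c ε r ≤ ε / r := by
  have hexp : exp (-c * r) ≤ 1 := exp_le_one_iff.2 (by nlinarith)
  have hden : r ≤ √r * (√r + ε) := by nlinarith [sq_sqrt hr.le, sqrt_nonneg r]
  exact div_le_div₀ hε (mul_le_of_le_one_right hε hexp) hr hden

theorem dampedKernel_le_mul_exp (hε : 0 ≤ ε) (hr : 1 ≤ r) :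
    dampedKernel c ε r ≤ ε * exp (-c * r) := by
  have hs : 1 ≤ √r := one_le_sqrt.2 hr
  have hden : 1 ≤ √r * (√r + ε) := by nlinarith
  exact div_le_self (by positivity) hden

theorem integrableOn_dampedKernel (hc : 0 < c) (hε : 0 ≤ ε) :
    IntegrableOn (dampedKernel c ε) (Ioi 0) := by
  have hmeas : AEStronglyMeasurable (dampedKernel c ε) :=
    measurable_dampedKernel.aestronglyMeasurable
  rw [← Ioc_union_Ioi_eq_Ioi zero_le_one]
  refine IntegrableOn.union ?_ ?_
  · exact integrableOn_of_nonneg_of_le measurableSet_Ioc hmeas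
      (fun _ _ => dampedKernel_nonneg hε) (fun _ hr => dampedKernel_le_rpow hε hc.le hr.1)
      (integrableOn_Ioc_zero_rpow_neg_half 1)
  · exact integrableOn_of_nonneg_of_le measurableSet_Ioi hmeas
      (fun _ _ => dampedKernel_nonneg hε) (fun _ hr => dampedKernel_le_mul_exp hε hr.le)
      ((exp_neg_integrableOn_Ioi 1 hc).const_mul ε)

theorem setIntegral_Ioc_zero_dampedKernel_le (hε : 0 ≤ ε) (hc : 0 ≤ c) {b : ℝ}
    (hb : 0 ≤ b) : ∫ r in Ioc 0 b, dampedKernel c ε r ≤ 2 * √b :=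
  (setIntegral_mono_of_nonneg (fun _ _ => dampedKernel_nonneg hε)
    (fun _ hr => dampedKernel_le_rpow hε hc hr.1)
    (integrableOn_Ioc_zero_rpow_neg_half b)).trans_eq (integral_Ioc_zero_rpow_neg_half hb)

theorem setIntegral_Ioc_dampedKernel_le (hε : 0 ≤ ε) (hc : 0 ≤ c) {a b : ℝ} (ha : 0 < a)
    (hab : a ≤ b) : ∫ r in Ioc a b, dampedKernel c ε r ≤ ε * log (b / a) := by
  rw [← integral_Ioc_inv ha hab, ← integral_const_mul]
  exact setIntegral_mono_of_nonneg (fun _ _ => dampedKernel_nonneg hε)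
    (fun _ hr => (dampedKernel_le_div hε hc (ha.trans hr.1)).trans_eq (div_eq_mul_inv _ _))
    ((integrableOn_Ioc_inv ha).const_mul ε)

theorem setIntegral_Ioi_dampedKernel_le (hε : 0 ≤ ε) (hc : 0 < c) {a : ℝ} (ha : 1 ≤ a) :
    ∫ r in Ioi a, dampedKernel c ε r ≤ ε * (exp (-c * a) / c) := by
  rw [← integral_Ioi_exp_neg_mul hc, ← integral_const_mul]
  exact setIntegral_mono_of_nonneg (fun _ _ => dampedKernel_nonneg hε)
    (fun _ hr => dampedKernel_le_mul_exp hε (ha.trans hr.le))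
    ((exp_neg_integrableOn_Ioi a hc).const_mul ε)

theorem integral_dampedKernel_le (hc : 0 < c) (hε₀ : 0 < ε) (hε₁ : ε ≤ 1) :
    ∫ r in Ioi 0, dampedKernel c ε r ≤ ε * (2 + c⁻¹ - 2 * log ε) := by
  have hε₀' : 0 < ε ^ 2 := by positivity
  have hε₁' : ε ^ 2 ≤ 1 := pow_le_one₀ hε₀.le hε₁
  have hint := integrableOn_dampedKernel hc hε₀.le
  rw [integral_Ioi_eq_Ioc_add_Ioc_add_Ioi hε₀'.le hε₁' (hint.mono_set Ioc_subset_Ioi_self)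
    (hint.mono_set (Ioc_subset_Ioi_self.trans (Ioi_subset_Ioi hε₀'.le)))
    (hint.mono_set (Ioi_subset_Ioi zero_le_one))]
  have h₁ := setIntegral_Ioc_zero_dampedKernel_le hε₀.le hc.le hε₀'.le
  have h₂ := setIntegral_Ioc_dampedKernel_le hε₀.le hc.le hε₀' hε₁'
  have h₃ := setIntegral_Ioi_dampedKernel_le hε₀.le hc le_rfl
  rw [sqrt_sq hε₀.le] at h₁
  rw [one_div, log_inv, log_pow, Nat.cast_ofNat] at h₂
  have hexp : exp (-c * 1) / c ≤ c⁻¹ :=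
    (div_le_div_of_nonneg_right (exp_le_one_iff.2 (by linarith)) hc.le).trans_eq (one_div c)
  nlinarith

end dampedKernel

/-- For every `c > 0` there is `C > 0` such that for all `ε ∈ (0, 1/2]`,
`∫₀^∞ ε e^{-cr} / (√r (√r + ε)) dr ≤ C ε |log ε|`. -/
theorem stmt_0 (c : ℝ) (hc : 0 < c) :
    ∃ C : ℝ, 0 < C ∧ ∀ ε : ℝ, ε ∈ Set.Ioc (0 : ℝ) (1 / 2) →
      (∫ r in Set.Ioi (0 : ℝ),
          ε * Real.exp (-c * r) / (Real.sqrt r * (Real.sqrt r + ε)))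
        ≤ C * ε * |Real.log ε| := by
  have hlog2 : 0 < log 2 := log_pos one_lt_two
  refine ⟨(2 + c⁻¹) / log 2 + 2, by positivity, fun ε ⟨hε₀, hε⟩ => ?_⟩
  have habs : |log ε| = -log ε := abs_of_neg (log_neg hε₀ (by linarith))
  have hconst : 2 + c⁻¹ ≤ (2 + c⁻¹) / log 2 * |log ε| := by
    rw [div_mul_eq_mul_div, le_div_iff₀ hlog2]
    exact mul_le_mul_of_nonneg_left (log_two_le_abs_log hε₀ hε) (by positivity)
  calc ∫ r in Ioi 0, dampedKernel c ε r
      ≤ ε * (2 + c⁻¹ - 2 * log ε) := integral_dampedKernel_le hc hε₀ (by linarith)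
    _ = ε * (2 + c⁻¹) + 2 * ε * |log ε| := by rw [habs]; ring
    _ ≤ ε * ((2 + c⁻¹) / log 2 * |log ε|) + 2 * ε * |log ε| := by gcongr
    _ = ((2 + c⁻¹) / log 2 + 2) * ε * |log ε| := by ring
end

section
/- Let D ⊂ ℝ² be a bounded domain. Suppose G: (0,∞) × D × D → ℝ satisfies |G(r, x, y)| ≤ M (√r + |x−y|)^{−2} e^{−c r} for constants M, c > 0. Then for every p ≥ 1 there is a constant C = C(p, D, M, c) such that the function ρ(x, y) = ∫₀^∞ ∫_D G(r, x, z) G(r, y, z) dz dr satisfies ‖ρ‖_{L^p(D × D)} ≤ C. -/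
/-!
By the triangle inequality one of `|x - z|`, `|y - z|` is at least `|x - y| / 2`, so with
`k = parabolicBound r`, i.e. `k(t) = (√r + t)^{-2}`, the product of the two kernel bounds at `z`
is at most `4 k(|x - y|) (k(|x - z|) + k(|y - z|))`. Interpolating, `k(t) ≤ r^{θ-1} t^{-2θ}`;
with `θ = s/2` on the first factor and `θ = 1 - s/4` on the others, the `z`-integral is a
locally integrable Riesz potential and the `r`-integral a convergent Gamma integral, so
`|ρ(x,y)| ≲ |x - y|^{-s}`. For `s = 1/p` this makes `|ρ|^p ≲ |x - y|^{-1}`, which is integrable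
over the bounded set `D`.

Neither `G` nor `D` is assumed measurable, so every estimate goes through lower integrals of
norms, which bound Bochner integrals unconditionally.
-/

open MeasureTheory Real Set Metric
open scoped ENNReal

theorem lintegral_rpow_mul_exp_neg_mul_lt_top {s b : ℝ} (hs : -1 < s) (hb : 0 < b) :
    ∫⁻ r in Ioi (0 : ℝ), ENNReal.ofReal (r ^ s * exp (-b * r)) < ∞ := by
  simpa using (integrableOn_rpow_mul_exp_neg_mul_rpow hs one_pos hb).lintegral_lt_top

theorem add_rpow_neg_le_rpow_mul_rpow {u v θ s : ℝ} (hu : 0 < u) (hv : 0 < v) (hθ₀ : 0 ≤ θ)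
    (hθ₁ : θ ≤ 1) (hs : 0 ≤ s) : (u + v) ^ (-s) ≤ u ^ (-((1 - θ) * s)) * v ^ (-(θ * s)) := by
  have hgeom : u ^ (1 - θ) * v ^ θ ≤ u + v :=
    (geom_mean_le_arith_mean2_weighted (by linarith) hθ₀ hu.le hv.le (by ring)).trans
      (by nlinarith)
  calc (u + v) ^ (-s) ≤ (u ^ (1 - θ) * v ^ θ) ^ (-s) :=
        rpow_le_rpow_of_nonpos (by positivity) hgeom (by linarith)
    _ = u ^ (-((1 - θ) * s)) * v ^ (-(θ * s)) := by
        rw [mul_rpow (by positivity) (by positivity), ← rpow_mul hu.le, ← rpow_mul hv.le]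
        ring_nf

noncomputable def parabolicBound (r t : ℝ) : ℝ := (Real.sqrt r + t) ^ (-(2 : ℝ))

section parabolicBound

variable {r : ℝ}

theorem parabolicBound_nonneg (hr : 0 < r) {t : ℝ} (ht : 0 ≤ t) : 0 ≤ parabolicBound r t := by
  unfold parabolicBound; positivity

theorem parabolicBound_antitoneOn (hr : 0 < r) : AntitoneOn (parabolicBound r) (Ici 0) := by
  intro t ht t' _ htt'
  have := sqrt_pos.2 hr
  exact rpow_le_rpow_of_nonpos (by rw [mem_Ici] at ht; positivity) (by linarith) (by norm_num)

theorem parabolicBound_half_le (hr : 0 < r) {t : ℝ} (ht : 0 ≤ t) :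
    parabolicBound r (t / 2) ≤ 4 * parabolicBound r t := by
  have hsqrt := sqrt_pos.2 hr
  calc parabolicBound r (t / 2) ≤ ((Real.sqrt r + t) / 2) ^ (-(2 : ℝ)) :=
        rpow_le_rpow_of_nonpos (by positivity) (by linarith) (by norm_num)
    _ = 4 * parabolicBound r t := by
        rw [div_rpow (by positivity) zero_le_two, parabolicBound, rpow_neg zero_le_two]
        norm_num
        ring

theorem parabolicBound_le_rpow_mul_rpow (hr : 0 < r) {t θ : ℝ} (ht : 0 < t) (hθ₀ : 0 ≤ θ)
    (hθ₁ : θ ≤ 1) :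
    parabolicBound r t ≤ r ^ (θ - 1) * t ^ (-(2 * θ)) := by
  calc parabolicBound r t ≤ Real.sqrt r ^ (-((1 - θ) * 2)) * t ^ (-(θ * 2)) :=
        add_rpow_neg_le_rpow_mul_rpow (sqrt_pos.2 hr) ht hθ₀ hθ₁ zero_le_two
    _ = r ^ (θ - 1) * t ^ (-(2 * θ)) := by
        rw [sqrt_eq_rpow, ← rpow_mul hr.le]
        ring_nf

theorem parabolicBound_mul_le (hr : 0 < r) {u v d : ℝ} (hu : 0 ≤ u) (hv : 0 ≤ v) (hd : 0 ≤ d)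
    (huv : d ≤ u + v) :
    parabolicBound r u * parabolicBound r v ≤
      4 * parabolicBound r d * (parabolicBound r u + parabolicBound r v) := by
  wlog h : u ≤ v generalizing u v
  · rw [mul_comm, add_comm]; exact this hv hu (by linarith) (by linarith)
  have hfar : parabolicBound r v ≤ 4 * parabolicBound r d :=
    (parabolicBound_antitoneOn hr (mem_Ici.2 (by positivity)) (mem_Ici.2 hv) (by linarith)).trans
      (parabolicBound_half_le hr hd)
  have hu' := parabolicBound_nonneg hr hu
  have hv' := parabolicBound_nonneg hr hv
  nlinarith

theorem parabolicBound_dist_mul_le {α : Type*} [PseudoMetricSpace α] (hr : 0 < r) {x y z : α}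
    {a b : ℝ} (hxy : 0 < dist x y) (hxz : 0 < dist x z) (hyz : 0 < dist y z)
    (ha₀ : 0 ≤ a) (ha₁ : a ≤ 1) (hb₀ : 0 ≤ b) (hb₁ : b ≤ 1) :
    parabolicBound r (dist x z) * parabolicBound r (dist y z) ≤
      4 * dist x y ^ (-(2 * b)) * r ^ (a + b - 2) *
        (dist x z ^ (-(2 * a)) + dist y z ^ (-(2 * a))) := by
  calc parabolicBound r (dist x z) * parabolicBound r (dist y z)
      ≤ 4 * parabolicBound r (dist x y) *
          (parabolicBound r (dist x z) + parabolicBound r (dist y z)) :=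
        parabolicBound_mul_le hr dist_nonneg dist_nonneg dist_nonneg (dist_triangle_right x y z)
    _ ≤ 4 * (r ^ (b - 1) * dist x y ^ (-(2 * b))) *
          (r ^ (a - 1) * dist x z ^ (-(2 * a)) + r ^ (a - 1) * dist y z ^ (-(2 * a))) := by
        have hfar := parabolicBound_le_rpow_mul_rpow hr hxy hb₀ hb₁
        have hnear_x := parabolicBound_le_rpow_mul_rpow hr hxz ha₀ ha₁
        have hnear_y := parabolicBound_le_rpow_mul_rpow hr hyz ha₀ ha₁
        have := parabolicBound_nonneg hr (dist_nonneg (x := x) (y := z))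
        have := parabolicBound_nonneg hr (dist_nonneg (x := y) (y := z))
        gcongr
    _ = 4 * dist x y ^ (-(2 * b)) * r ^ (a + b - 2) *
          (dist x z ^ (-(2 * a)) + dist y z ^ (-(2 * a))) := by
        rw [show a + b - 2 = (b - 1) + (a - 1) by ring, rpow_add hr]
        ring

end parabolicBound

noncomputable def covariance {E : Type*} [MeasurableSpace E] (μ : Measure E) (D : Set E)
    (G : ℝ → E → E → ℝ) (x y : E) : ℝ :=
  ∫ r in Ioi (0 : ℝ), ∫ z in D, G r x z * G r y z ∂μ

theorem enorm_mul_enorm_le_of_abs_le_parabolicBound {α : Type*} [MetricSpace α] {D : Set α}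
    {M c r a b : ℝ} {G : ℝ → α → α → ℝ}
    (hG : ∀ r : ℝ, 0 < r → ∀ x ∈ D, ∀ y ∈ D,
      |G r x y| ≤ M * parabolicBound r (dist x y) * exp (-c * r))
    (hr : 0 < r) {x y z : α} (hx : x ∈ D) (hy : y ∈ D) (hz : z ∈ D)
    (hxy : x ≠ y) (hxz : x ≠ z) (hyz : y ≠ z)
    (ha₀ : 0 ≤ a) (ha₁ : a ≤ 1) (hb₀ : 0 ≤ b) (hb₁ : b ≤ 1) :
    ‖G r x z‖ₑ * ‖G r y z‖ₑ ≤
      ENNReal.ofReal (4 * M ^ 2 * dist x y ^ (-(2 * b))) *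
        ENNReal.ofReal (r ^ (a + b - 2) * exp (-(2 * c) * r)) *
        (ENNReal.ofReal (dist x z ^ (-(2 * a))) + ENNReal.ofReal (dist y z ^ (-(2 * a)))) := by
  have hGx := hG r hr x hx z hz
  have hGy := hG r hr y hy z hz
  have key : |G r x z| * |G r y z| ≤ 4 * M ^ 2 * dist x y ^ (-(2 * b)) *
      (r ^ (a + b - 2) * exp (-(2 * c) * r)) * (dist x z ^ (-(2 * a)) + dist y z ^ (-(2 * a))) :=
    calc |G r x z| * |G r y z|
        ≤ (M * parabolicBound r (dist x z) * exp (-c * r)) *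
            (M * parabolicBound r (dist y z) * exp (-c * r)) :=
          mul_le_mul hGx hGy (abs_nonneg _) ((abs_nonneg _).trans hGx)
      _ = M ^ 2 * exp (-(2 * c) * r) *
            (parabolicBound r (dist x z) * parabolicBound r (dist y z)) := by
          rw [show -(2 * c) * r = -c * r + -c * r by ring, exp_add]
          ring
      _ ≤ M ^ 2 * exp (-(2 * c) * r) *
            (4 * dist x y ^ (-(2 * b)) * r ^ (a + b - 2) *
              (dist x z ^ (-(2 * a)) + dist y z ^ (-(2 * a)))) :=
          mul_le_mul_of_nonneg_left (parabolicBound_dist_mul_le hr (dist_pos.2 hxy)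
            (dist_pos.2 hxz) (dist_pos.2 hyz) ha₀ ha₁ hb₀ hb₁) (by positivity)
      _ = _ := by ring
  calc ‖G r x z‖ₑ * ‖G r y z‖ₑ = ENNReal.ofReal (|G r x z| * |G r y z|) := by
        rw [ENNReal.ofReal_mul (abs_nonneg _), Real.enorm_eq_ofReal_abs, Real.enorm_eq_ofReal_abs]
    _ ≤ _ := ENNReal.ofReal_le_ofReal key
    _ = _ := by
        rw [ENNReal.ofReal_mul (by positivity), ENNReal.ofReal_mul (by positivity),
          ENNReal.ofReal_add (by positivity) (by positivity)]

section

variable {E : Type*} [NormedAddCommGroup E] [MeasurableSpace E] [BorelSpace E] {μ : Measure E}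
  {D : Set E} {R M c : ℝ}

theorem lintegral_ball_norm_rpow_neg_lt_top [NormedSpace ℝ E] [FiniteDimensional ℝ E]
    [μ.IsAddHaarMeasure] (hd : 1 ≤ Module.finrank ℝ E) {s : ℝ}
    (hs : s < Module.finrank ℝ E) :
    ∫⁻ w in ball (0 : E) R, ENNReal.ofReal (‖w‖ ^ (-s)) ∂μ < ∞ :=
  (integrableOn_ball_of_norm_le_rpow (C := 1) hd hs
    (ae_of_all _ fun w => by rw [one_mul, Real.norm_of_nonneg (by positivity)])
    (by fun_prop : Measurable fun w : E => ‖w‖ ^ (-s)).aestronglyMeasurable).lintegral_lt_top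

theorem setLIntegral_dist_rpow_neg_le [μ.IsAddRightInvariant] {x : E}
    (hD : D ⊆ ball x R) (s : ℝ) :
    ∫⁻ z in D, ENNReal.ofReal (dist x z ^ (-s)) ∂μ ≤
      ∫⁻ w in ball (0 : E) R, ENNReal.ofReal (‖w‖ ^ (-s)) ∂μ := by
  have hball : ball x R = (· - x) ⁻¹' ball 0 R := by ext z; simp [dist_eq_norm]
  calc ∫⁻ z in D, ENNReal.ofReal (dist x z ^ (-s)) ∂μ
      ≤ ∫⁻ z in ball x R, ENNReal.ofReal (dist x z ^ (-s)) ∂μ := lintegral_mono_set hD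
    _ = ∫⁻ z in (· - x) ⁻¹' ball 0 R, ENNReal.ofReal (‖z - x‖ ^ (-s)) ∂μ := by
        simp_rw [hball, dist_comm x, dist_eq_norm]
    _ = ∫⁻ w in ball (0 : E) R, ENNReal.ofReal (‖w‖ ^ (-s)) ∂μ :=
        (measurePreserving_sub_right μ x).setLIntegral_comp_preimage_emb
          (measurableEmbedding_subRight x) (fun w => ENNReal.ofReal (‖w‖ ^ (-s))) _

theorem enorm_covariance_le [μ.IsAddRightInvariant] [NullSingletonClass μ]
    (hDR : ∀ x ∈ D, D ⊆ ball x R) {G : ℝ → E → E → ℝ}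
    (hG : ∀ r : ℝ, 0 < r → ∀ x ∈ D, ∀ y ∈ D,
      |G r x y| ≤ M * parabolicBound r (dist x y) * exp (-c * r))
    {x y : E} (hx : x ∈ D) (hy : y ∈ D) (hxy : x ≠ y)
    {a b : ℝ} (ha₀ : 0 ≤ a) (ha₁ : a ≤ 1) (hb₀ : 0 ≤ b) (hb₁ : b ≤ 1) :
    ‖covariance μ D G x y‖ₑ ≤ ENNReal.ofReal (4 * M ^ 2 * dist x y ^ (-(2 * b))) *
      (∫⁻ r in Ioi (0 : ℝ), ENNReal.ofReal (r ^ (a + b - 2) * exp (-(2 * c) * r))) *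
      (2 * ∫⁻ w in ball (0 : E) R, ENNReal.ofReal (‖w‖ ^ (-(2 * a))) ∂μ) := by
  set C := ENNReal.ofReal (4 * M ^ 2 * dist x y ^ (-(2 * b)))
  set f : ℝ → ℝ≥0∞ := fun r => ENNReal.ofReal (r ^ (a + b - 2) * exp (-(2 * c) * r))
  set g : E → E → ℝ≥0∞ := fun x z => ENNReal.ofReal (dist x z ^ (-(2 * a)))
  calc ‖covariance μ D G x y‖ₑ
      ≤ ∫⁻ r in Ioi (0 : ℝ), ∫⁻ z in D, ‖G r x z‖ₑ * ‖G r y z‖ₑ ∂μ := by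
        refine (enorm_integral_le_lintegral_enorm _).trans (lintegral_mono fun r => ?_)
        simpa only [enorm_mul] using
          enorm_integral_le_lintegral_enorm (fun z => G r x z * G r y z)
    _ ≤ ∫⁻ r in Ioi (0 : ℝ), ∫⁻ z in D, C * f r * (g x z + g y z) ∂μ := by
        refine setLIntegral_mono' measurableSet_Ioi fun r hr =>
          setLIntegral_mono_ae (Measurable.aemeasurable (by fun_prop)) ?_
        filter_upwards [μ.ae_ne x, μ.ae_ne y] with z hzx hzy hz
        exact enorm_mul_enorm_le_of_abs_le_parabolicBound hG hr hx hy hz hxy hzx.symm hzy.symm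
          ha₀ ha₁ hb₀ hb₁
    _ = C * (∫⁻ r in Ioi (0 : ℝ), f r) * ∫⁻ z in D, g x z + g y z ∂μ := by
        rw [← lintegral_const_mul' C _ ENNReal.ofReal_ne_top,
          ← lintegral_mul_const _ (Measurable.const_mul (by fun_prop) C)]
        refine setLIntegral_congr_fun measurableSet_Ioi fun r _ => ?_
        exact lintegral_const_mul' _ _ (ENNReal.mul_ne_top ENNReal.ofReal_ne_top
          ENNReal.ofReal_ne_top)
    _ ≤ C * (∫⁻ r in Ioi (0 : ℝ), f r) *
          (2 * ∫⁻ w in ball (0 : E) R, ENNReal.ofReal (‖w‖ ^ (-(2 * a))) ∂μ) := by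
        rw [lintegral_add_left (by fun_prop), two_mul]
        exact mul_le_mul_right (add_le_add (setLIntegral_dist_rpow_neg_le (hDR x hx) _)
          (setLIntegral_dist_rpow_neg_le (hDR y hy) _)) _

theorem exists_abs_covariance_le [NormedSpace ℝ E] [FiniteDimensional ℝ E]
    [μ.IsAddHaarMeasure] (hd : 2 ≤ Module.finrank ℝ E) (hDR : ∀ x ∈ D, D ⊆ ball x R)
    (hc : 0 < c) {s : ℝ} (hs₀ : 0 < s) (hs₂ : s ≤ 2) :
    ∃ K, 0 ≤ K ∧ ∀ G : ℝ → E → E → ℝ, (∀ r : ℝ, 0 < r → ∀ x ∈ D, ∀ y ∈ D,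
      |G r x y| ≤ M * parabolicBound r (dist x y) * exp (-c * r)) →
      ∀ x ∈ D, ∀ y ∈ D, x ≠ y → |covariance μ D G x y| ≤ K * dist x y ^ (-s) := by
  have : Nontrivial E := Module.nontrivial_of_finrank_pos (R := ℝ) (by omega)
  set B := ∫⁻ r in Ioi (0 : ℝ),
    ENNReal.ofReal (r ^ ((1 - s / 4) + s / 2 - 2) * exp (-(2 * c) * r))
  set A := ∫⁻ w in ball (0 : E) R, ENNReal.ofReal (‖w‖ ^ (-(2 * (1 - s / 4)))) ∂μ
  have hB : B < ∞ := lintegral_rpow_mul_exp_neg_mul_lt_top (by linarith) (by linarith)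
  have hA : A < ∞ := lintegral_ball_norm_rpow_neg_lt_top (by omega)
    (by have : (2 : ℝ) ≤ Module.finrank ℝ E := by exact_mod_cast hd
        linarith)
  have hBA : B * (2 * A) ≠ ∞ := ENNReal.mul_ne_top hB.ne (ENNReal.mul_ne_top (by simp) hA.ne)
  refine ⟨4 * M ^ 2 * (B * (2 * A)).toReal, by positivity, fun G hG x hx y hy hxy => ?_⟩
  have h := enorm_covariance_le (μ := μ) hDR hG hx hy hxy (a := 1 - s / 4) (b := s / 2)
    (by linarith) (by linarith) (by linarith) (by linarith)
  rw [Real.enorm_eq_ofReal_abs, mul_assoc, ← ENNReal.ofReal_toReal hBA,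
    ← ENNReal.ofReal_mul (by positivity), ENNReal.ofReal_le_ofReal_iff (by positivity),
    show 2 * (s / 2) = s by ring] at h
  linarith

theorem setIntegral_setIntegral_abs_rpow_le [μ.IsAddRightInvariant] [NullSingletonClass μ]
    (hDR : ∀ x ∈ D, D ⊆ ball x R) (hD : μ D < ∞)
    (hA : ∫⁻ w in ball (0 : E) R, ENNReal.ofReal (‖w‖ ^ (-1 : ℝ)) ∂μ ≠ ∞)
    {F : E → E → ℝ} {K p : ℝ} (hK : 0 ≤ K) (hp : 0 < p)
    (hF : ∀ x ∈ D, ∀ y ∈ D, x ≠ y → |F x y| ≤ K * dist x y ^ (-(1 / p))) :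
    ∫ x in D, ∫ y in D, |F x y| ^ p ∂μ ∂μ ≤
      K ^ p * (∫⁻ w in ball (0 : E) R, ENNReal.ofReal (‖w‖ ^ (-1 : ℝ)) ∂μ).toReal *
        μ.real D := by
  have hpow : ∀ x ∈ D, ∀ y ∈ D, x ≠ y → |F x y| ^ p ≤ K ^ p * dist x y ^ (-1 : ℝ) := by
    intro x hx y hy hxy
    calc |F x y| ^ p ≤ (K * dist x y ^ (-(1 / p))) ^ p :=
          rpow_le_rpow (abs_nonneg _) (hF x hx y hy hxy) hp.le
      _ = K ^ p * dist x y ^ (-1 : ℝ) := by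
          rw [mul_rpow hK (by positivity), ← rpow_mul dist_nonneg, neg_mul, one_div,
            inv_mul_cancel₀ hp.ne']
  have hinner : ∀ x ∈ D, ‖∫ y in D, |F x y| ^ p ∂μ‖ ≤
      K ^ p * (∫⁻ w in ball (0 : E) R, ENNReal.ofReal (‖w‖ ^ (-1 : ℝ)) ∂μ).toReal := by
    intro x hx
    rw [← toReal_enorm, ← ENNReal.toReal_ofReal (by positivity : 0 ≤ K ^ p),
      ← ENNReal.toReal_mul]
    refine ENNReal.toReal_mono (ENNReal.mul_ne_top ENNReal.ofReal_ne_top hA) ?_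
    calc ‖∫ y in D, |F x y| ^ p ∂μ‖ₑ
        ≤ ∫⁻ y in D, ENNReal.ofReal (K ^ p) * ENNReal.ofReal (dist x y ^ (-1 : ℝ)) ∂μ := by
          refine (enorm_integral_le_lintegral_enorm _).trans
            (setLIntegral_mono_ae (Measurable.aemeasurable (by fun_prop)) ?_)
          filter_upwards [μ.ae_ne x] with y hyx hy
          rw [← ENNReal.ofReal_mul (by positivity), Real.enorm_of_nonneg (by positivity)]
          exact ENNReal.ofReal_le_ofReal (hpow x hx y hy hyx.symm)
      _ ≤ ENNReal.ofReal (K ^ p) *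
            ∫⁻ w in ball (0 : E) R, ENNReal.ofReal (‖w‖ ^ (-1 : ℝ)) ∂μ := by
          rw [lintegral_const_mul' _ _ ENNReal.ofReal_ne_top]
          exact mul_le_mul_right (setLIntegral_dist_rpow_neg_le (hDR x hx) 1) _
  calc ∫ x in D, ∫ y in D, |F x y| ^ p ∂μ ∂μ ≤ ‖∫ x in D, ∫ y in D, |F x y| ^ p ∂μ ∂μ‖ :=
        Real.le_norm_self _
    _ ≤ _ := norm_setIntegral_le_of_norm_le_const hD hinner

end

theorem stmt_2_general (D : Set (EuclideanSpace ℝ (Fin 2))) (hD : Bornology.IsBounded D)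
    (M c : ℝ) (hc : 0 < c) (p : ℝ) (hp : 1 ≤ p) :
    ∃ C : ℝ, 0 < C ∧
      ∀ G : ℝ → EuclideanSpace ℝ (Fin 2) → EuclideanSpace ℝ (Fin 2) → ℝ,
        (∀ r : ℝ, 0 < r → ∀ x ∈ D, ∀ y ∈ D,
          |G r x y| ≤ M * (Real.sqrt r + dist x y) ^ (-(2 : ℝ)) * Real.exp (-c * r)) →
        (∫ x in D, ∫ y in D,
            |∫ r in Set.Ioi (0 : ℝ), ∫ z in D, G r x z * G r y z| ^ p) ^ (1 / p) ≤ C := by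
  have hp₀ : 0 < p := by linarith
  have hd : Module.finrank ℝ (EuclideanSpace ℝ (Fin 2)) = 2 := finrank_euclideanSpace_fin
  obtain ⟨R, hR⟩ := isBounded_iff.1 hD
  have hDR : ∀ x ∈ D, D ⊆ ball x (R + 1) := fun x hx y hy => by
    rw [mem_ball]; linarith [hR hy hx]
  obtain ⟨K, hK, hρ⟩ := exists_abs_covariance_le (μ := volume) (M := M) hd.ge hDR hc
    (s := 1 / p) (by positivity) (by rw [div_le_iff₀ hp₀]; linarith)
  set A := ∫⁻ w in ball (0 : EuclideanSpace ℝ (Fin 2)) (R + 1),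
    ENNReal.ofReal (‖w‖ ^ (-1 : ℝ))
  have hA : A ≠ ∞ :=
    (lintegral_ball_norm_rpow_neg_lt_top (by omega) (by rw [hd]; norm_num)).ne
  refine ⟨(K ^ p * A.toReal * volume.real D) ^ (1 / p) + 1, by positivity, fun G hG => ?_⟩
  calc _ ≤ (K ^ p * A.toReal * volume.real D) ^ (1 / p) :=
        rpow_le_rpow (integral_nonneg fun x => integral_nonneg fun y => by positivity)
          (setIntegral_setIntegral_abs_rpow_le hDR hD.measure_lt_top hA hK hp₀ (hρ G hG))
          (by positivity)
    _ ≤ _ := le_add_of_nonneg_right zero_le_one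

/-- If `G : (0,∞) × D × D → ℝ` satisfies `|G(r,x,y)| ≤ M (√r + |x−y|)^{−2} e^{−cr}` on a
bounded domain `D ⊂ ℝ²`, then for every `p ≥ 1` the covariance
`ρ(x,y) = ∫₀^∞ ∫_D G(r,x,z) G(r,y,z) dz dr` satisfies `‖ρ‖_{L^p(D×D)} ≤ C(p, D, M, c)`. -/
theorem stmt_2 (D : Set (EuclideanSpace ℝ (Fin 2))) (hD : Bornology.IsBounded D)
    (M c : ℝ) (hM : 0 < M) (hc : 0 < c) (p : ℝ) (hp : 1 ≤ p) :
    ∃ C : ℝ, 0 < C ∧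
      ∀ G : ℝ → EuclideanSpace ℝ (Fin 2) → EuclideanSpace ℝ (Fin 2) → ℝ,
        (∀ r : ℝ, 0 < r → ∀ x ∈ D, ∀ y ∈ D,
          |G r x y| ≤ M * (Real.sqrt r + dist x y) ^ (-(2 : ℝ)) * Real.exp (-c * r)) →
        (∫ x in D, ∫ y in D,
            |∫ r in Set.Ioi (0 : ℝ), ∫ z in D, G r x z * G r y z| ^ p) ^ (1 / p) ≤ C :=
  stmt_2_general D hD M c hc p hp
end

section
/- Let m ≥ 1, n ≥ 2 be integers and Λ > 0. Suppose y : [0, T] → [0, ∞) is differentiable and satisfies y'(t) + y(t)^{1 + (n−1)/m} ≤ Λ for all t ∈ (0, T]. Then there is a constant C depending only on m, n, Λ such that y(t) ≤ C (t^{−m/(n−1)} ∨ 1) for all t ∈ (0, T], with constant independent of y(0). -/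
open MeasureTheory Real Set Topology

/-- Generic comparison: if `y ≤ g` at `a` and whenever `g < y` the derivative of `y`
is strictly below that of `g`, then `y ≤ g` at `b`. -/
private lemma comp_ode {y g : ℝ → ℝ} {a b : ℝ} (hab : a < b)
    (hy : ContinuousOn y (Set.Icc a b)) (hg : ContinuousOn g (Set.Icc a b))
    (key : ∀ s ∈ Set.Ioo a b, g s < y s →
      DifferentiableAt ℝ y s ∧ DifferentiableAt ℝ g s ∧ deriv y s < deriv g s)
    (h0 : y a ≤ g a) : y b ≤ g b := by
  by_contra hb
  push_neg at hb
  set h : ℝ → ℝ := fun s => g s - y s with hh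
  have hcont : ContinuousOn h (Set.Icc a b) := hg.sub hy
  set S : Set ℝ := Set.Icc a b ∩ h ⁻¹' Set.Ici 0 with hS
  have haS : a ∈ S := ⟨⟨le_refl a, hab.le⟩, by simp [hh]; linarith⟩
  have hSne : S.Nonempty := ⟨a, haS⟩
  have hSbdd : BddAbove S := ⟨b, fun x hx => hx.1.2⟩
  have hSclosed : IsClosed S :=
    hcont.preimage_isClosed_of_isClosed isClosed_Icc isClosed_Ici
  have hstar := hSclosed.csSup_mem hSne hSbdd
  set c := sSup S with hc
  obtain ⟨⟨hca, hcb⟩, hch⟩ := hstar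
  have hch : (0:ℝ) ≤ h c := hch
  have hcb' : c < b := by
    rcases lt_or_eq_of_le hcb with h' | h'
    · exact h'
    · exfalso; rw [h'] at hch; simp [hh] at hch; linarith
  have hneg : ∀ s ∈ Set.Ioc c b, h s < 0 := by
    rintro s ⟨hs1, hs2⟩
    by_contra hcon
    push_neg at hcon
    have hmem : s ∈ S := ⟨⟨le_trans hca hs1.le, hs2⟩, hcon⟩
    exact absurd (le_csSup hSbdd hmem) (not_le.mpr hs1)
  have hmono : StrictMonoOn h (Set.Icc c b) := by
    apply strictMonoOn_of_deriv_pos (convex_Icc c b)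
      (hcont.mono (Set.Icc_subset_Icc hca le_rfl))
    intro s hs
    rw [interior_Icc] at hs
    have hs' : s ∈ Set.Ioo a b := ⟨lt_of_le_of_lt hca hs.1, hs.2⟩
    have hlt : g s < y s := by
      have := hneg s ⟨hs.1, hs.2.le⟩
      simp only [hh] at this; linarith
    obtain ⟨hyd, hgd, hder⟩ := key s hs' hlt
    have hds : deriv h s = deriv g s - deriv y s := by
      simp only [hh]; exact deriv_sub hgd hyd
    rw [hds]; linarith
  have := hmono ⟨le_refl c, hcb'.le⟩ ⟨hcb'.le, le_refl b⟩ hcb'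
  have hb' : h b < 0 := by simp only [hh]; linarith
  linarith

/-- Comparison ODE lemma: if `y : [0,T] → [0,∞)` is differentiable and satisfies
`y' + y^{1+(n−1)/m} ≤ Λ`, then `y(t) ≤ C (t^{−m/(n−1)} ∨ 1)` with `C = C(m, n, Λ)`
independent of `y(0)` and of `T`. -/
theorem stmt_7 (m n : ℕ) (hm : 1 ≤ m) (hn : 2 ≤ n) (Λ : ℝ) (hΛ : 0 < Λ) :
    ∃ C : ℝ, 0 < C ∧
      ∀ T : ℝ, 0 < T → ∀ y : ℝ → ℝ,
        (∀ t ∈ Set.Icc (0 : ℝ) T, 0 ≤ y t) →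
        DifferentiableOn ℝ y (Set.Icc 0 T) →
        (∀ t ∈ Set.Ioc (0 : ℝ) T,
          derivWithin y (Set.Icc 0 T) t + y t ^ ((1 : ℝ) + ((n : ℝ) - 1) / (m : ℝ)) ≤ Λ) →
        ∀ t ∈ Set.Ioc (0 : ℝ) T,
          y t ≤ C * max (t ^ (-(m : ℝ) / ((n : ℝ) - 1))) 1 := by
  have hmr : (1:ℝ) ≤ (m:ℝ) := by exact_mod_cast hm
  have hnr : (1:ℝ) ≤ (n:ℝ) - 1 := by
    have : (2:ℝ) ≤ (n:ℝ) := by exact_mod_cast hn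
    linarith
  have hmr0 : (0:ℝ) < (m:ℝ) := by linarith
  have hnr0 : (0:ℝ) < (n:ℝ) - 1 := by linarith
  obtain ⟨β, hβdef⟩ : ∃ b : ℝ, b = (m:ℝ) / ((n:ℝ) - 1) := ⟨_, rfl⟩
  obtain ⟨α, hαdef⟩ : ∃ a : ℝ, a = 1 + ((n:ℝ) - 1) / (m:ℝ) := ⟨_, rfl⟩
  have hβ0 : 0 < β := hβdef ▸ div_pos hmr0 hnr0
  have hα1 : 1 < α := by
    have : 0 < ((n:ℝ) - 1) / (m:ℝ) := div_pos hnr0 hmr0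
    rw [hαdef]; linarith
  have hα0 : 0 < α := by linarith
  have hβα : β * α = β + 1 := by
    rw [hβdef, hαdef]; field_simp
  have hβα' : β * (α - 1) = 1 := by nlinarith [hβα]
  obtain ⟨A, hA1, hAkey⟩ : ∃ A : ℝ, 1 ≤ A ∧ Λ + A * β ≤ A ^ α := by
    have hΛβ0 : (0:ℝ) < Λ + β := by linarith
    refine ⟨max 1 ((Λ + β) ^ β), le_max_left _ _, ?_⟩
    set A := max 1 ((Λ + β) ^ β) with hAdef
    have hA1 : (1:ℝ) ≤ A := le_max_left _ _
    have hA0 : (0:ℝ) < A := lt_of_lt_of_le one_pos hA1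
    have hApow : Λ + β ≤ A ^ (α - 1) := by
      have h1 : (Λ + β) ^ β ≤ A := le_max_right _ _
      have h2 : ((Λ + β) ^ β) ^ (α-1) ≤ A ^ (α-1) :=
        Real.rpow_le_rpow (Real.rpow_nonneg hΛβ0.le _) h1 (by linarith)
      have h3 : ((Λ + β) ^ β) ^ (α-1) = Λ + β := by
        rw [← Real.rpow_mul hΛβ0.le, hβα', Real.rpow_one]
      linarith [h3 ▸ h2]
    have h1 : A ^ α = A * A ^ (α - 1) := by
      nth_rewrite 1 [show α = 1 + (α - 1) by ring]
      rw [Real.rpow_add hA0, Real.rpow_one]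
    have h2 : A * (Λ + β) ≤ A * A ^ (α-1) :=
      mul_le_mul_of_nonneg_left hApow hA0.le
    nlinarith
  have hA0 : (0:ℝ) < A := lt_of_lt_of_le one_pos hA1
  have hAΛ : Λ ≤ A ^ α := by nlinarith
  refine ⟨A, hA0, ?_⟩
  intro T hT y hpos hdiff hode
  -- basic facts
  have hcont : ContinuousOn y (Set.Icc 0 T) := hdiff.continuousOn
  have hderiv : ∀ s, 0 < s → s < T → DifferentiableAt ℝ y s ∧ deriv y s ≤ Λ - y s ^ α := by
    intro s hs0 hsT
    have hnhds : Set.Icc (0:ℝ) T ∈ 𝓝 s := Icc_mem_nhds hs0 hsT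
    have hd : DifferentiableAt ℝ y s :=
      (hdiff s ⟨hs0.le, hsT.le⟩).differentiableAt hnhds
    have heq : derivWithin y (Set.Icc 0 T) s = deriv y s := derivWithin_of_mem_nhds hnhds
    have := hode s ⟨hs0, hsT.le⟩
    rw [heq, ← hαdef] at this
    exact ⟨hd, by linarith⟩
  -- Claim 1: small times
  have claim1 : ∀ t, 0 < t → t ≤ T → t ≤ 1 → y t ≤ A * t ^ (-β) := by
    intro t ht0 htT ht1
    -- bound of y on [0, t]
    obtain ⟨x₀, hx₀, hM⟩ := isCompact_Icc.exists_isMaxOn (Set.nonempty_Icc.mpr ht0.le)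
      (hcont.mono (Set.Icc_subset_Icc le_rfl htT))
    set M : ℝ := y x₀ with hMdef
    have hM0 : 0 ≤ M := hpos x₀ ⟨hx₀.1, hx₀.2.trans htT⟩
    set c₀ : ℝ := A / (M + 1) with hc₀def
    have hc₀ : 0 < c₀ := div_pos hA0 (by linarith)
    set s₁ : ℝ := min (t/2) (c₀ ^ (1/β)) with hs₁def
    have hs₁0 : 0 < s₁ := lt_min (by linarith) (Real.rpow_pos_of_pos hc₀ _)
    have hs₁t : s₁ < t := lt_of_le_of_lt (min_le_left _ _) (by linarith)
    -- the barrier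
    set ψ : ℝ → ℝ := fun s => A * s ^ (-β) with hψdef
    have hψpos : ∀ s, 0 < s → 0 < ψ s := fun s hs =>
      mul_pos hA0 (Real.rpow_pos_of_pos hs _)
    -- y s₁ ≤ ψ s₁
    have hinit : y s₁ ≤ ψ s₁ := by
      have h1 : s₁ ≤ c₀ ^ (1/β) := min_le_right _ _
      have h2 : (c₀ ^ (1/β)) ^ (-β) ≤ s₁ ^ (-β) :=
        Real.rpow_le_rpow_of_nonpos hs₁0 h1 (by linarith)
      have h3 : (c₀ ^ (1/β)) ^ (-β) = c₀⁻¹ := by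
        rw [← Real.rpow_mul hc₀.le]
        have : 1/β * (-β) = -1 := by field_simp
        rw [this, Real.rpow_neg_one]
      have h4 : c₀⁻¹ = (M + 1) / A := by
        rw [hc₀def]; field_simp
      have h5 : M + 1 ≤ ψ s₁ := by
        have : A * ((M+1)/A) ≤ A * s₁ ^ (-β) :=
          mul_le_mul_of_nonneg_left (by rw [← h4, ← h3]; exact h2) hA0.le
        calc M + 1 = A * ((M+1)/A) := by field_simp
        _ ≤ ψ s₁ := this
      have h6 : y s₁ ≤ M := hM ⟨hs₁0.le, hs₁t.le.trans (le_refl t)⟩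
      linarith
    -- apply comparison on [s₁, t]
    have := comp_ode (y := y) (g := ψ) hs₁t
      (hcont.mono (Set.Icc_subset_Icc hs₁0.le htT))
      (by
        apply ContinuousOn.mul continuousOn_const
        apply ContinuousOn.rpow_const continuousOn_id
        intro x hx
        exact Or.inl (ne_of_gt (lt_of_lt_of_le hs₁0 hx.1)))
      (by
        rintro s ⟨hsa, hsb⟩ hlt
        have hs0 : 0 < s := hs₁0.trans hsa
        have hsT : s < T := lt_of_lt_of_le hsb htT
        obtain ⟨hyd, hyineq⟩ := hderiv s hs0 hsT
        have hψd : HasDerivAt ψ (A * (-β * s ^ (-β - 1))) s := by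
          exact (Real.hasDerivAt_rpow_const (Or.inl hs0.ne')).const_mul A
        refine ⟨hyd, hψd.differentiableAt, ?_⟩
        rw [hψd.deriv]
        -- compute ψ s ^ α
        have hψα : ψ s ^ α = A ^ α * s ^ (-β - 1) := by
          rw [hψdef]
          rw [Real.mul_rpow hA0.le (Real.rpow_nonneg hs0.le _),
            ← Real.rpow_mul hs0.le]
          have : -β * α = -β - 1 := by linarith [hβα]
          rw [this]
        have hP1 : (1:ℝ) ≤ s ^ (-β - 1) :=
          Real.one_le_rpow_of_pos_of_le_one_of_nonpos hs0 (hsb.le.trans ht1) (by linarith)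
        have hylt : ψ s ^ α < y s ^ α :=
          Real.rpow_lt_rpow (hψpos s hs0).le hlt hα0
        -- deriv y s ≤ Λ - y s ^ α < Λ - ψ s ^ α ≤ A * (-β * s^(-β-1))
        have hfinal : Λ - ψ s ^ α ≤ A * (-β * s ^ (-β - 1)) := by
          rw [hψα]
          set P := s ^ (-β - 1)
          have hkey2 : Λ * P ≤ (A ^ α - A * β) * P := by
            apply mul_le_mul_of_nonneg_right _ (by linarith)
            linarith
          nlinarith [mul_le_mul_of_nonneg_left hP1 hΛ.le]
        linarith)
      hinit
    exact this
  -- Claim 2: large times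
  have claim2 : ∀ t, 1 < t → t ≤ T → y t ≤ A := by
    intro t ht1 htT
    have hT1 : (1:ℝ) ≤ T := le_trans ht1.le htT
    have hy1 : y 1 ≤ A := by
      have := claim1 1 one_pos hT1 le_rfl
      rwa [Real.one_rpow, mul_one] at this
    have := comp_ode (y := y) (g := fun _ => A) ht1
      (hcont.mono (Set.Icc_subset_Icc (by linarith) htT))
      continuousOn_const
      (by
        rintro s ⟨hsa, hsb⟩ hlt
        have hs0 : (0:ℝ) < s := lt_trans one_pos hsa
        have hsT : s < T := lt_of_lt_of_le hsb htT
        obtain ⟨hyd, hyineq⟩ := hderiv s hs0 hsT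
        refine ⟨hyd, differentiableAt_const _, ?_⟩
        rw [deriv_const]
        have : A ^ α < y s ^ α := Real.rpow_lt_rpow hA0.le hlt hα0
        linarith)
      hy1
    exact this
  -- conclusion
  rintro t ⟨ht0, htT⟩
  have hexp : -(m:ℝ) / ((n:ℝ)-1) = -β := by rw [hβdef]; ring
  have hmax1 : (1:ℝ) ≤ max (t ^ (-(m : ℝ) / ((n : ℝ) - 1))) 1 := le_max_right _ _
  rcases le_or_gt t 1 with ht1 | ht1
  · have h1 := claim1 t ht0 htT ht1
    have h2 : t ^ (-(m : ℝ) / ((n : ℝ) - 1)) = t ^ (-β) := by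
      rw [hexp]
    calc y t ≤ A * t ^ (-β) := h1
    _ ≤ A * max (t ^ (-(m : ℝ) / ((n : ℝ) - 1))) 1 := by
        apply mul_le_mul_of_nonneg_left _ hA0.le
        rw [← h2]; exact le_max_left _ _
  · have h1 := claim2 t ht1 htT
    calc y t ≤ A := h1
    _ = A * 1 := (mul_one A).symm
    _ ≤ A * max (t ^ (-(m : ℝ) / ((n : ℝ) - 1))) 1 :=
        mul_le_mul_of_nonneg_left hmax1 hA0.le
end
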